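/- Let x ∈ ℝ² be regular, i.e. B(x,γ) ≠ 0 for every γ ∈ Φ. Then the Weyl-group orbit {w·x : w ∈ W} has exactly 12 elements, and under the action of the subgroup W_H of W generated by the reflections s_{(2,0)} and s_{(0,2)} this orbit decomposes into exactly 3 orbits, each of size 4. (This shows the fibers of the induced map on semisimple conjugacy classes from the dual of H = SL₂×SL₂/±1 to the dual of G₂ have size 3 at regular elements.) -/

import Mathlib

/-!
In these coordinates `t₁` and `t₂` change the sign of one coordinate, so the `W_H`-orbit of
`z` is the sign orbit `{±z.1} × {±z.2}`. Since `(2,0) = s₂ α₁` and `(0,2) = s₁ α₂`, `W_H` lies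
in `W`, so `W x` contains the sign orbits of `x`, `s₁ x` and `s₂ x`; their union is stable under
the involutions `s₁`, `s₂`, hence equals `W x`. For `x = (a,b)` regularity says that
`a, b, a ± b, a ± 3b` are nonzero: then the three points have nonzero coordinates (each sign
orbit has 4 elements), and the squares of their first coordinates differ by products of these
values, so the three sign orbits are pairwise disjoint.
-/

noncomputable section

/-- The bilinear form `B((x₁,x₂),(y₁,y₂)) = x₁y₁ + 3x₂y₂` on `ℝ²`. -/
def B (x y : ℝ × ℝ) : ℝ := x.1 * y.1 + 3 * x.2 * y.2

/-- The short simple root of `G₂`. -/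
def α₁ : ℝ × ℝ := (-1, 1)
/-- The long simple root of `G₂`. -/
def α₂ : ℝ × ℝ := (3, -1)

/-- The `B`-orthogonal reflection in `α`, as a linear map. -/
def reflLM (α : ℝ × ℝ) : (ℝ × ℝ) →ₗ[ℝ] (ℝ × ℝ) where
  toFun x := x - (2 * B x α / B α α) • α
  map_add' x y := by
    simp only [B, Prod.fst_add, Prod.snd_add, Prod.smul_mk, smul_eq_mul, Prod.mk_add_mk,
      Prod.ext_iff, Prod.fst_sub, Prod.snd_sub, Prod.smul_fst, Prod.smul_snd]
    constructor <;> ring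
  map_smul' c x := by
    simp only [B, Prod.smul_fst, Prod.smul_snd, smul_eq_mul, RingHom.id_apply,
      Prod.ext_iff, Prod.fst_sub, Prod.snd_sub]
    constructor <;> ring

/-- The `B`-orthogonal reflection in `α`, as a linear automorphism, given that the
reflection is involutive. -/
def reflLE (α : ℝ × ℝ) (h : (reflLM α).comp (reflLM α) = LinearMap.id) :
    (ℝ × ℝ) ≃ₗ[ℝ] (ℝ × ℝ) :=
  LinearEquiv.ofLinear (reflLM α) (reflLM α) h h

lemma invol₁ : (reflLM α₁).comp (reflLM α₁) = LinearMap.id := by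
  apply LinearMap.ext
  intro x
  simp only [LinearMap.comp_apply, LinearMap.id_apply, reflLM, LinearMap.coe_mk, AddHom.coe_mk,
    B, α₁, Prod.ext_iff, Prod.fst_sub, Prod.snd_sub, Prod.smul_fst, Prod.smul_snd, smul_eq_mul]
  norm_num
  constructor <;> ring

lemma invol₂ : (reflLM α₂).comp (reflLM α₂) = LinearMap.id := by
  apply LinearMap.ext
  intro x
  simp only [LinearMap.comp_apply, LinearMap.id_apply, reflLM, LinearMap.coe_mk, AddHom.coe_mk,
    B, α₂, Prod.ext_iff, Prod.fst_sub, Prod.snd_sub, Prod.smul_fst, Prod.smul_snd, smul_eq_mul]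
  norm_num
  constructor <;> ring

/-- The simple reflection `s₁ = s_{α₁}`. -/
def s₁ : (ℝ × ℝ) ≃ₗ[ℝ] (ℝ × ℝ) := reflLE α₁ invol₁

/-- The simple reflection `s₂ = s_{α₂}`. -/
def s₂ : (ℝ × ℝ) ≃ₗ[ℝ] (ℝ × ℝ) := reflLE α₂ invol₂

/-- The Weyl group of `G₂`, as the subgroup of linear automorphisms of `ℝ²`
generated by `s₁` and `s₂`. -/
def W : Subgroup ((ℝ × ℝ) ≃ₗ[ℝ] (ℝ × ℝ)) := Subgroup.closure {s₁, s₂}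

/-- The set of roots of `G₂`. -/
def Φ : Set (ℝ × ℝ) :=
  {(2,0), (-2,0), (1,1), (1,-1), (-1,1), (-1,-1),
   (0,2), (0,-2), (3,1), (3,-1), (-3,1), (-3,-1)}

lemma involT₁ : (reflLM ((2 : ℝ), (0 : ℝ))).comp (reflLM ((2 : ℝ), (0 : ℝ)))
    = LinearMap.id := by
  apply LinearMap.ext
  intro x
  simp only [LinearMap.comp_apply, LinearMap.id_apply, reflLM, LinearMap.coe_mk, AddHom.coe_mk,
    B, Prod.ext_iff, Prod.fst_sub, Prod.snd_sub, Prod.smul_fst, Prod.smul_snd, smul_eq_mul]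
  norm_num
  ring

lemma involT₂ : (reflLM ((0 : ℝ), (2 : ℝ))).comp (reflLM ((0 : ℝ), (2 : ℝ)))
    = LinearMap.id := by
  apply LinearMap.ext
  intro x
  simp only [LinearMap.comp_apply, LinearMap.id_apply, reflLM, LinearMap.coe_mk, AddHom.coe_mk,
    B, Prod.ext_iff, Prod.fst_sub, Prod.snd_sub, Prod.smul_fst, Prod.smul_snd, smul_eq_mul]
  norm_num
  ring

/-- The reflection in the root `2ε₁ = (2,0)`. -/
def t₁ : (ℝ × ℝ) ≃ₗ[ℝ] (ℝ × ℝ) := reflLE ((2 : ℝ), (0 : ℝ)) involT₁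

/-- The reflection in the root `2ε₂ = (0,2)`. -/
def t₂ : (ℝ × ℝ) ≃ₗ[ℝ] (ℝ × ℝ) := reflLE ((0 : ℝ), (2 : ℝ)) involT₂

/-- The Weyl group `W_H` of `H`, generated by the reflections `s_{(2,0)}` and
`s_{(0,2)}`. -/
def WH : Subgroup ((ℝ × ℝ) ≃ₗ[ℝ] (ℝ × ℝ)) := Subgroup.closure {t₁, t₂}

/-- The `W`-orbit of a point. -/
def orbW (x : ℝ × ℝ) : Set (ℝ × ℝ) := {y | ∃ w ∈ W, y = w x}

/-- The `W_H`-orbit of a point. -/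
def orbWH (x : ℝ × ℝ) : Set (ℝ × ℝ) := {y | ∃ w ∈ WH, y = w x}

open Set
open scoped Pointwise

lemma smul_mem_of_mem_closure_of_involutive {G α : Type*} [Group G] [MulAction G α]
    {S : Set G} {U : Set α} (hS : ∀ g ∈ S, g⁻¹ = g) (hU : ∀ g ∈ S, ∀ z ∈ U, g • z ∈ U)
    {w : G} (hw : w ∈ Subgroup.closure S) {z : α} (hz : z ∈ U) : w • z ∈ U := by
  have hle : Subgroup.closure S ≤ MulAction.stabilizer G U := by
    refine (Subgroup.closure_le _).mpr fun g hg => MulAction.mem_stabilizer_iff.mpr ?_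
    have hsub : g • U ⊆ U := smul_set_subset_iff.mpr (hU g hg)
    exact hsub.antisymm (subset_smul_set_iff.mpr (by rwa [hS g hg]))
  rw [← MulAction.mem_stabilizer_iff.mp (hle hw)]
  exact smul_mem_smul_set hz

section PairNeg

variable {R : Type*} [CommRing R] [NoZeroDivisors R]

lemma mem_pair_neg_iff {c t : R} : t ∈ ({c, -c} : Set R) ↔ t ^ 2 = c ^ 2 := by
  rw [sq_eq_sq_iff_eq_or_eq_neg, mem_insert_iff, mem_singleton_iff]

lemma disjoint_pair_neg {c c' : R} (h : c ^ 2 ≠ c' ^ 2) : Disjoint ({c, -c} : Set R) {c', -c'} :=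
  disjoint_left.mpr fun _ hc hc' =>
    h ((mem_pair_neg_iff.mp hc).symm.trans (mem_pair_neg_iff.mp hc'))

end PairNeg

lemma reflLE_apply (α : ℝ × ℝ) (h : (reflLM α).comp (reflLM α) = LinearMap.id) (x : ℝ × ℝ) :
    reflLE α h x = x - (2 * B x α / B α α) • α :=
  rfl

lemma s₁_apply (c d : ℝ) : s₁ (c, d) = ((c + 3 * d) / 2, (c - d) / 2) := by
  simp only [s₁, reflLE_apply, B, α₁, Prod.ext_iff, Prod.fst_sub, Prod.snd_sub, Prod.smul_fst,
    Prod.smul_snd, smul_eq_mul]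
  constructor <;> ring

lemma s₂_apply (c d : ℝ) : s₂ (c, d) = ((-c + 3 * d) / 2, (c + d) / 2) := by
  simp only [s₂, reflLE_apply, B, α₂, Prod.ext_iff, Prod.fst_sub, Prod.snd_sub, Prod.smul_fst,
    Prod.smul_snd, smul_eq_mul]
  constructor <;> ring

lemma t₁_apply (c d : ℝ) : t₁ (c, d) = (-c, d) := by
  simp only [t₁, reflLE_apply, B, Prod.ext_iff, Prod.fst_sub, Prod.snd_sub, Prod.smul_fst,
    Prod.smul_snd, smul_eq_mul]
  constructor <;> ring

lemma t₂_apply (c d : ℝ) : t₂ (c, d) = (c, -d) := by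
  simp only [t₂, reflLE_apply, B, Prod.ext_iff, Prod.fst_sub, Prod.snd_sub, Prod.smul_fst,
    Prod.smul_snd, smul_eq_mul]
  constructor <;> ring

lemma s₁_mem_W : s₁ ∈ W := Subgroup.subset_closure (mem_insert _ _)

lemma s₂_mem_W : s₂ ∈ W := Subgroup.subset_closure (mem_insert_of_mem _ rfl)

lemma t₁_eq : t₁ = s₂ * s₁ * s₂ := by
  ext ⟨c, d⟩ <;> simp only [LinearEquiv.mul_apply, s₁_apply, s₂_apply, t₁_apply] <;> ring

lemma t₂_eq : t₂ = s₁ * s₂ * s₁ := by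
  ext ⟨c, d⟩ <;> simp only [LinearEquiv.mul_apply, s₁_apply, s₂_apply, t₂_apply] <;> ring

lemma WH_le_W : WH ≤ W := by
  refine (Subgroup.closure_le W).mpr (pair_subset ?_ ?_)
  · rw [t₁_eq]; exact mul_mem (mul_mem s₂_mem_W s₁_mem_W) s₂_mem_W
  · rw [t₂_eq]; exact mul_mem (mul_mem s₁_mem_W s₂_mem_W) s₁_mem_W

lemma orbW_subset_of_mem {x y : ℝ × ℝ} (hy : y ∈ orbW x) : orbW y ⊆ orbW x := by
  obtain ⟨w, hw, rfl⟩ := hy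
  rintro _ ⟨v, hv, rfl⟩
  exact ⟨v * w, mul_mem hv hw, rfl⟩

lemma apply_mem_orbW {w : (ℝ × ℝ) ≃ₗ[ℝ] (ℝ × ℝ)} (hw : w ∈ W) (x : ℝ × ℝ) : w x ∈ orbW x :=
  ⟨w, hw, rfl⟩

lemma orbWH_subset_orbW (x : ℝ × ℝ) : orbWH x ⊆ orbW x :=
  fun _ ⟨w, hw, hy⟩ => ⟨w, WH_le_W hw, hy⟩

def signOrbit (z : ℝ × ℝ) : Set (ℝ × ℝ) := {z.1, -z.1} ×ˢ {z.2, -z.2}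

instance (z : ℝ × ℝ) : Finite (signOrbit z) := by
  unfold signOrbit; infer_instance

lemma mem_signOrbit_iff {y z : ℝ × ℝ} :
    y ∈ signOrbit z ↔ y.1 ^ 2 = z.1 ^ 2 ∧ y.2 ^ 2 = z.2 ^ 2 := by
  rw [signOrbit, mem_prod, mem_pair_neg_iff, mem_pair_neg_iff]

lemma mem_signOrbit_self (z : ℝ × ℝ) : z ∈ signOrbit z := mem_signOrbit_iff.mpr ⟨rfl, rfl⟩

lemma signOrbit_eq_of_mem {y z : ℝ × ℝ} (hy : y ∈ signOrbit z) : signOrbit y = signOrbit z := by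
  obtain ⟨h₁, h₂⟩ := mem_signOrbit_iff.mp hy
  ext u
  rw [mem_signOrbit_iff, mem_signOrbit_iff, h₁, h₂]

lemma ne_zero_of_mem_signOrbit {y z : ℝ × ℝ} (hz : z.1 ≠ 0 ∧ z.2 ≠ 0) (hy : y ∈ signOrbit z) :
    y.1 ≠ 0 ∧ y.2 ≠ 0 := by
  obtain ⟨h₁, h₂⟩ := mem_signOrbit_iff.mp hy
  exact ⟨fun h => hz.1 (by simpa [h] using h₁.symm), fun h => hz.2 (by simpa [h] using h₂.symm)⟩

lemma ncard_signOrbit {z : ℝ × ℝ} (hz : z.1 ≠ 0 ∧ z.2 ≠ 0) : (signOrbit z).ncard = 4 := by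
  rw [signOrbit, ncard_prod, ncard_pair (self_ne_neg.mpr hz.1), ncard_pair (self_ne_neg.mpr hz.2)]

lemma disjoint_signOrbit {y z : ℝ × ℝ} (h : y.1 ^ 2 ≠ z.1 ^ 2) :
    Disjoint (signOrbit y) (signOrbit z) :=
  disjoint_prod.mpr (Or.inl (disjoint_pair_neg h))

lemma orbWH_eq_signOrbit (z : ℝ × ℝ) : orbWH z = signOrbit z := by
  obtain ⟨a, b⟩ := z
  apply Subset.antisymm
  · rintro _ ⟨w, hw, rfl⟩
    refine smul_mem_of_mem_closure_of_involutive ?_ ?_ hw (mem_signOrbit_self _)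
    · rintro g (rfl | rfl) <;> rfl
    · rintro g (rfl | rfl) ⟨c, d⟩ hz <;>
        simpa [LinearEquiv.smul_def, t₁_apply, t₂_apply, mem_signOrbit_iff] using hz
  · have ht₁ : t₁ ∈ WH := Subgroup.subset_closure (mem_insert _ _)
    have ht₂ : t₂ ∈ WH := Subgroup.subset_closure (mem_insert_of_mem _ rfl)
    rintro ⟨c, d⟩ ⟨hc, hd⟩
    simp only [mem_insert_iff, mem_singleton_iff] at hc hd
    rcases hc with rfl | rfl <;> rcases hd with rfl | rfl
    · exact ⟨1, one_mem _, rfl⟩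
    · exact ⟨t₂, ht₂, (t₂_apply _ _).symm⟩
    · exact ⟨t₁, ht₁, (t₁_apply _ _).symm⟩
    · exact ⟨t₁ * t₂, mul_mem ht₁ ht₂, by rw [LinearEquiv.mul_apply, t₂_apply, t₁_apply]⟩

lemma apply_mem_union_signOrbit {x : ℝ × ℝ} {g : (ℝ × ℝ) ≃ₗ[ℝ] (ℝ × ℝ)}
    (hg : g ∈ ({s₁, s₂} : Set _)) {z : ℝ × ℝ}
    (hz : z ∈ signOrbit x ∪ signOrbit (s₁ x) ∪ signOrbit (s₂ x)) :
    g z ∈ signOrbit x ∪ signOrbit (s₁ x) ∪ signOrbit (s₂ x) := by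
  obtain ⟨a, b⟩ := x
  simp only [s₁_apply, s₂_apply, signOrbit, mem_union, mem_prod, mem_insert_iff,
    mem_singleton_iff] at hz ⊢
  obtain ⟨c, d⟩ := z
  rcases hg with rfl | rfl <;>
  rcases hz with ((⟨rfl | rfl, rfl | rfl⟩ | ⟨rfl | rfl, rfl | rfl⟩) | ⟨rfl | rfl, rfl | rfl⟩) <;>
  simp only [s₁_apply, s₂_apply] <;> ring_nf <;> tauto

lemma orbW_eq_union (x : ℝ × ℝ) :
    orbW x = signOrbit x ∪ signOrbit (s₁ x) ∪ signOrbit (s₂ x) := by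
  apply Subset.antisymm
  · rintro _ ⟨w, hw, rfl⟩
    refine smul_mem_of_mem_closure_of_involutive ?_ (fun g hg z hz => ?_) hw ?_
    · rintro g (rfl | rfl) <;> rfl
    · exact apply_mem_union_signOrbit hg hz
    · exact mem_union_left _ (mem_union_left _ (mem_signOrbit_self x))
  · have h : ∀ y ∈ orbW x, signOrbit y ⊆ orbW x := fun y hy =>
      orbWH_eq_signOrbit y ▸ (orbWH_subset_orbW y).trans (orbW_subset_of_mem hy)
    refine union_subset (union_subset (h x ⟨1, one_mem _, rfl⟩) ?_) ?_
    · exact h _ (apply_mem_orbW s₁_mem_W x)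
    · exact h _ (apply_mem_orbW s₂_mem_W x)

lemma image_orbWH_signOrbit (z : ℝ × ℝ) : orbWH '' signOrbit z = {signOrbit z} := by
  refine Subset.antisymm ?_
    (singleton_subset_iff.mpr ⟨z, mem_signOrbit_self z, orbWH_eq_signOrbit z⟩)
  rintro _ ⟨y, hy, rfl⟩
  rw [orbWH_eq_signOrbit, signOrbit_eq_of_mem hy, mem_singleton_iff]

lemma signOrbits_of_regular {x : ℝ × ℝ} (hx : ∀ γ ∈ Φ, B x γ ≠ 0) :
    (x.1 ≠ 0 ∧ x.2 ≠ 0) ∧ ((s₁ x).1 ≠ 0 ∧ (s₁ x).2 ≠ 0) ∧ ((s₂ x).1 ≠ 0 ∧ (s₂ x).2 ≠ 0) ∧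
      Disjoint (signOrbit x) (signOrbit (s₁ x)) ∧ Disjoint (signOrbit x) (signOrbit (s₂ x)) ∧
      Disjoint (signOrbit (s₁ x)) (signOrbit (s₂ x)) := by
  obtain ⟨a, b⟩ := x
  have hB : ∀ c d : ℝ, (c, d) ∈ Φ → a * c + 3 * b * d ≠ 0 := fun c d h => hx (c, d) h
  rw [s₁_apply, s₂_apply]
  refine ⟨⟨?_, ?_⟩, ⟨?_, ?_⟩, ⟨?_, ?_⟩, disjoint_signOrbit ?_, disjoint_signOrbit ?_,
    disjoint_signOrbit ?_⟩ <;> intro h <;> dsimp only at h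
  · exact hB 2 0 (by simp [Φ]) (by linear_combination 2 * h)
  · exact hB 0 2 (by simp [Φ]) (by linear_combination 6 * h)
  · exact hB 1 1 (by simp [Φ]) (by linear_combination 2 * h)
  · exact hB 3 (-1) (by simp [Φ]) (by linear_combination 6 * h)
  · exact hB 1 (-1) (by simp [Φ]) (by linear_combination -2 * h)
  · exact hB 3 1 (by simp [Φ]) (by linear_combination 6 * h)
  · exact mul_ne_zero (hB 1 (-1) (by simp [Φ])) (hB 3 1 (by simp [Φ])) (by linear_combination 4 * h)
  · exact mul_ne_zero (hB 3 (-1) (by simp [Φ])) (hB 1 1 (by simp [Φ])) (by linear_combination 4 * h)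
  · exact mul_ne_zero (hB 2 0 (by simp [Φ])) (hB 0 2 (by simp [Φ])) (by linear_combination 4 * h)

/-- For regular `x`, the `W`-orbit of `x` has 12 elements and decomposes into
exactly 3 orbits of `W_H`, each of size 4. -/
theorem stmt16 :
    ∀ x : ℝ × ℝ, (∀ γ ∈ Φ, B x γ ≠ 0) →
      (orbW x).ncard = 12 ∧
      (∀ y ∈ orbW x, orbWH y ⊆ orbW x ∧ (orbWH y).ncard = 4) ∧
      (orbWH '' orbW x).ncard = 3 := by
  intro x hx
  obtain ⟨h₀, h₁, h₂, d₀₁, d₀₂, d₁₂⟩ := signOrbits_of_regular hx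
  refine ⟨?_, fun y hy => ⟨(orbWH_subset_orbW y).trans (orbW_subset_of_mem hy), ?_⟩, ?_⟩
  · rw [orbW_eq_union, ncard_union_eq (d₀₂.union_left d₁₂), ncard_union_eq d₀₁,
      ncard_signOrbit h₀, ncard_signOrbit h₁, ncard_signOrbit h₂]
  · rw [orbWH_eq_signOrbit]
    rw [orbW_eq_union] at hy
    rcases hy with (hy | hy) | hy
    exacts [ncard_signOrbit (ne_zero_of_mem_signOrbit h₀ hy),
      ncard_signOrbit (ne_zero_of_mem_signOrbit h₁ hy),
      ncard_signOrbit (ne_zero_of_mem_signOrbit h₂ hy)]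
  · have hne : ∀ z, signOrbit z ≠ ⊥ := fun z => (nonempty_of_mem (mem_signOrbit_self z)).ne_empty
    rw [orbW_eq_union, image_union, image_union, image_orbWH_signOrbit, image_orbWH_signOrbit,
      image_orbWH_signOrbit, singleton_union, union_singleton]
    exact ncard_eq_three.mpr
      ⟨_, _, _, (d₀₂.ne (hne _)).symm, (d₁₂.ne (hne _)).symm, d₀₁.ne (hne _), rfl⟩
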